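/- Let q_1, …, q_n be integers, not all zero, let n_0 be an integer with |n_0| < (1/2)(|q_1| + ⋯ + |q_n|), and let ν, η_1, …, η_n be nilpotent elements of a commutative ℂ-algebra. Then the function of z given by μ(z) = z^{−n_0} e^{ν} · ∏_{q_j ≠ 0} 1/(z^{−q_j/2} e^{η_j/2} − z^{q_j/2} e^{−η_j/2}) (interpreted coefficientwise in the nilpotents, i.e., each coefficient is a rational function of z after clearing half-integer powers) has every coefficient tending to 0 as z → 0 and as z → ∞. -/

import Mathlib

/-! Each factor `z^{q/2} (a - z^q b)⁻¹` of `μ`, with `a, b` units, is `O(|z|^{|q|/2})` at `0` and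
`O(|z|^{-|q|/2})` at `∞`. Where `z^q → 0` the inverse tends to `a⁻¹`, leaving only
`|z^{q/2}| = |z|^{q/2}`; the other sign reduces to this one through the identity
`z^{-q/2} (a - z^{-q} b)⁻¹ = -z^{q/2} (b - z^q a)⁻¹`. Hence `μ(z) = O(|z|^{-n₀ + Σ|qⱼ|/2})` at `0`
and `μ(z) = O(|z|^{-n₀ - Σ|qⱼ|/2})` at `∞`, and `|n₀| < Σ|qⱼ|/2` makes the first exponent
positive and the second negative. -/

open Filter Topology NormedSpace Asymptotics Bornology

theorem Ring.inverse_algebraMap {𝕜 R : Type*} [Field 𝕜] [Semiring R] [Algebra 𝕜 R] (c : 𝕜) :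
    Ring.inverse (algebraMap 𝕜 R c) = algebraMap 𝕜 R c⁻¹ := by
  rcases eq_or_ne c 0 with rfl | hc
  · simp
  · simpa using Ring.inverse_unit (Units.map (algebraMap 𝕜 R : 𝕜 →* R) (Units.mk0 c hc))

theorem Ring.inverse_smul {𝕜 R : Type*} [Field 𝕜] [CommSemiring R] [Algebra 𝕜 R] (c : 𝕜)
    (x : R) : Ring.inverse (c • x) = c⁻¹ • Ring.inverse x := by
  rw [Algebra.smul_def, Algebra.smul_def, Ring.mul_inverse_rev, Ring.inverse_algebraMap, mul_comm]

theorem smul_mul_prod_eq_smul_mul_prod_smul {ι R S : Type*} [CommSemiring R] [CommSemiring S]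
    [Algebra R S] (s : Finset ι) (c : R) (d : ι → R) (x : S) (y : ι → S) :
    (c * ∏ j ∈ s, d j) • (x * ∏ j ∈ s, y j) = (c • x) * ∏ j ∈ s, d j • y j := by
  simp only [Algebra.smul_def, map_mul, map_prod, Finset.prod_mul_distrib]
  ring

theorem Complex.cpow_neg_half_mul_zpow {z : ℂ} (hz : z ≠ 0) (q : ℤ) :
    z ^ (-(q : ℂ) / 2) * z ^ q = z ^ ((q : ℂ) / 2) := by
  rw [← Complex.cpow_intCast, ← Complex.cpow_add _ _ hz]
  ring_nf

theorem tendsto_zpow_nhdsNE_zero_of_pos {𝕜 : Type*} [NormedField 𝕜] {p : ℤ} (hp : 0 < p) :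
    Tendsto (fun z : 𝕜 => z ^ p) (𝓝[≠] 0) (𝓝 0) := by
  simpa [zero_zpow p hp.ne'] using
    (continuousAt_zpow₀ (0 : 𝕜) p (Or.inr hp.le)).tendsto.mono_left nhdsWithin_le_nhds

theorem tendsto_zpow_cobounded_of_neg {𝕜 : Type*} [NormedField 𝕜] {p : ℤ} (hp : p < 0) :
    Tendsto (fun z : 𝕜 => z ^ p) (cobounded 𝕜) (𝓝 0) := by
  rw [tendsto_zero_iff_norm_tendsto_zero]
  simpa [norm_zpow, Function.comp_def] using
    (tendsto_zpow_atTop_zero hp).comp tendsto_norm_cobounded_atTop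

theorem tendsto_norm_rpow_nhdsNE_zero {E : Type*} [SeminormedAddCommGroup E] {r : ℝ}
    (hr : 0 < r) : Tendsto (fun x : E => ‖x‖ ^ r) (𝓝[≠] 0) (𝓝 0) := by
  have h := (Real.continuousAt_rpow_const 0 r (Or.inr hr.le)).tendsto.comp
    (tendsto_norm_zero (E := E))
  rw [Real.zero_rpow hr.ne'] at h
  exact h.mono_left nhdsWithin_le_nhds

theorem tendsto_norm_rpow_cobounded {E : Type*} [SeminormedAddCommGroup E] {r : ℝ} (hr : r < 0) :
    Tendsto (fun x : E => ‖x‖ ^ r) (cobounded E) (𝓝 0) := by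
  simpa [Function.comp_def] using
    (tendsto_rpow_neg_atTop (neg_pos.2 hr)).comp (tendsto_norm_cobounded_atTop (E := E))

theorem isBigO_zpow_smul_mul_prod {ι 𝕜 A : Type*} [NormedField 𝕜] [NormedCommRing A]
    [NormedAlgebra 𝕜 A] {l : Filter 𝕜} (hl : ∀ᶠ z in l, z ≠ 0) (m : ℤ) (x : A) (s : Finset ι)
    {f : ι → 𝕜 → A} {e : ι → ℝ} (hf : ∀ j ∈ s, f j =O[l] fun z => ‖z‖ ^ e j) :
    (fun z => (z ^ m • x) * ∏ j ∈ s, f j z) =O[l] fun z => ‖z‖ ^ ((m : ℝ) + ∑ j ∈ s, e j) := by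
  have hx : (fun z : 𝕜 => z ^ m • x) =O[l] fun z => ‖z‖ ^ (m : ℝ) :=
    isBigO_of_le' (c := ‖x‖) l fun z => by
      rw [norm_smul, norm_zpow, Real.rpow_intCast, Real.norm_of_nonneg (by positivity), mul_comm]
  refine (hx.mul (IsBigO.finsetProd hf)).congr' .rfl ?_
  filter_upwards [hl] with z hz
  rw [Real.rpow_add (norm_pos_iff.2 hz), Real.rpow_sum_of_pos (norm_pos_iff.2 hz)]

section RotationFactor

variable {A : Type*} [NormedCommRing A] [NormedAlgebra ℂ A]

/-- `z^{q/2} (a - z^q b)⁻¹ = (z^{-q/2} a - z^{q/2} b)⁻¹`; in `μ`, `a = e^{η/2}`, `b = e^{-η/2}`. -/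
noncomputable def rotationFactor (q : ℤ) (a b : A) (z : ℂ) : A :=
  z ^ ((q : ℂ) / 2) • Ring.inverse (a - z ^ q • b)

theorem rotationFactor_neg {z : ℂ} (hz : z ≠ 0) (q : ℤ) (a b : A) :
    rotationFactor (-q) a b z = -rotationFactor q b a z := by
  have hsplit : a - z ^ (-q) • b = (-(z ^ q)⁻¹) • (b - z ^ q • a) := by
    rw [smul_sub, smul_smul, neg_mul, inv_mul_cancel₀ (zpow_ne_zero q hz), zpow_neg]
    simp only [neg_smul, one_smul]
    abel
  rw [rotationFactor, rotationFactor, hsplit, Ring.inverse_smul, smul_smul, inv_neg, inv_inv,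
    Int.cast_neg, mul_neg, Complex.cpow_neg_half_mul_zpow hz, neg_smul]

variable [CompleteSpace A]

theorem isBigO_rotationFactor {l : Filter ℂ} {q : ℤ} (hq : Tendsto (fun z : ℂ => z ^ q) l (𝓝 0))
    {a : A} (ha : IsUnit a) (b : A) :
    rotationFactor q a b =O[l] fun z => ‖z‖ ^ ((q : ℝ) / 2) := by
  have hden : Tendsto (fun z : ℂ => a - z ^ q • b) l (𝓝 a) := by
    simpa using tendsto_const_nhds.sub (hq.smul_const b)
  have hinv : Tendsto (fun z : ℂ => Ring.inverse (a - z ^ q • b)) l (𝓝 (Ring.inverse a)) :=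
    (NormedRing.inverse_continuousAt ha.unit).tendsto.comp hden
  have hpow : (fun z : ℂ => z ^ ((q : ℂ) / 2)) =O[l] fun z => ‖z‖ ^ ((q : ℝ) / 2) :=
    IsBigO.of_norm_le fun z => by
      rw [show (q : ℂ) / 2 = ((q / 2 : ℝ) : ℂ) by push_cast; rfl, Complex.norm_cpow_real]
  unfold rotationFactor
  simpa only [smul_eq_mul, mul_one] using hpow.smul (hinv.isBigO_one ℝ)

theorem isBigO_rotationFactor_of_tendsto_zpow_neg {l : Filter ℂ} (hl : ∀ᶠ z in l, z ≠ 0)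
    {q : ℤ} (hq : Tendsto (fun z : ℂ => z ^ (-q)) l (𝓝 0)) (a : A) {b : A} (hb : IsUnit b) :
    rotationFactor q a b =O[l] fun z => ‖z‖ ^ (-(q : ℝ) / 2) := by
  have hflip : rotationFactor q a b =ᶠ[l] fun z => -rotationFactor (-q) b a z := by
    filter_upwards [hl] with z hz
    rw [← rotationFactor_neg hz, neg_neg]
  simpa using hflip.trans_isBigO (isBigO_rotationFactor hq hb a).neg_left

theorem isBigO_rotationFactor_nhdsNE {q : ℤ} (hq : q ≠ 0) {a b : A} (ha : IsUnit a)
    (hb : IsUnit b) : rotationFactor q a b =O[𝓝[≠] 0] fun z => ‖z‖ ^ (|(q : ℝ)| / 2) := by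
  rcases hq.lt_or_gt with hneg | hpos
  · rw [abs_of_neg (Int.cast_lt_zero.2 hneg)]
    exact isBigO_rotationFactor_of_tendsto_zpow_neg self_mem_nhdsWithin
      (tendsto_zpow_nhdsNE_zero_of_pos (neg_pos.2 hneg)) a hb
  · rw [abs_of_pos (Int.cast_pos.2 hpos)]
    exact isBigO_rotationFactor (tendsto_zpow_nhdsNE_zero_of_pos hpos) ha b

theorem isBigO_rotationFactor_cobounded {q : ℤ} (hq : q ≠ 0) {a b : A} (ha : IsUnit a)
    (hb : IsUnit b) : rotationFactor q a b =O[cobounded ℂ] fun z => ‖z‖ ^ (-|(q : ℝ)| / 2) := by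
  rcases hq.lt_or_gt with hneg | hpos
  · rw [abs_of_neg (Int.cast_lt_zero.2 hneg), neg_neg]
    exact isBigO_rotationFactor (tendsto_zpow_cobounded_of_neg hneg) ha b
  · rw [abs_of_pos (Int.cast_pos.2 hpos)]
    exact isBigO_rotationFactor_of_tendsto_zpow_neg (eventually_ne_cobounded 0)
      (tendsto_zpow_cobounded_of_neg (neg_neg_iff_pos.2 hpos)) a hb

end RotationFactor

theorem stmt_17_general {A : Type*} [NormedCommRing A] [NormedAlgebra ℂ A] [CompleteSpace A]
    (n : ℕ) (q : Fin n → ℤ) (n₀ : ℤ)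
    (hn₀ : ((|n₀| : ℤ) : ℝ) < (1 / 2) * ∑ j, ((|q j| : ℤ) : ℝ))
    (ν : A) (η : Fin n → A) :
    letI μ : ℂ → A := fun z =>
      (z ^ (-n₀) * ∏ j ∈ Finset.univ.filter (fun j => q j ≠ 0), z ^ ((q j : ℂ) / 2)) •
        (NormedSpace.exp ν * ∏ j ∈ Finset.univ.filter (fun j => q j ≠ 0),
          Ring.inverse (NormedSpace.exp ((2 : ℂ)⁻¹ • η j) - z ^ (q j) • NormedSpace.exp (-((2 : ℂ)⁻¹ • η j))))
    Tendsto μ (𝓝[≠] (0 : ℂ)) (𝓝 0) ∧ Tendsto μ (Bornology.cobounded ℂ) (𝓝 0) := by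
  simp_rw [smul_mul_prod_eq_smul_mul_prod_smul]
  have hexp (x : A) : IsUnit (exp x) :=
    isUnit_exp_of_mem_ball (𝕂 := ℂ) ((expSeries_radius_eq_top ℂ A).symm ▸ edist_lt_top _ _)
  have hsum : ∑ j ∈ Finset.univ.filter (fun j => q j ≠ 0), |(q j : ℝ)| / 2 =
      (1 / 2) * ∑ j, |(q j : ℝ)| := by
    rw [← Finset.sum_div, Finset.sum_filter_of_ne (p := (q · ≠ 0)) fun j _ h => by simpa using h]
    ring
  push_cast at hn₀
  obtain ⟨hn₀_lower, hn₀_upper⟩ := abs_lt.1 hn₀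
  constructor
  · refine (isBigO_zpow_smul_mul_prod self_mem_nhdsWithin _ _ _ fun j hj =>
      isBigO_rotationFactor_nhdsNE (Finset.mem_filter.1 hj).2 (hexp _) (hexp _)).trans_tendsto
      (tendsto_norm_rpow_nhdsNE_zero ?_)
    rw [hsum, Int.cast_neg]
    linarith
  · refine (isBigO_zpow_smul_mul_prod (eventually_ne_cobounded 0) _ _ _ fun j hj =>
      isBigO_rotationFactor_cobounded (Finset.mem_filter.1 hj).2 (hexp _) (hexp _)).trans_tendsto
      (tendsto_norm_rpow_cobounded ?_)
    rw [Finset.sum_congr rfl fun j _ => neg_div 2 _, Finset.sum_neg_distrib, hsum, Int.cast_neg]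
    linarith

/-- **Local fixed-point contributions tend to `0` at `z = 0` and `z = ∞`.**
Let `q₁, …, qₙ` be integers, not all zero, let `n₀` be an integer with
`|n₀| < (1/2)(|q₁| + ⋯ + |qₙ|)`, and let `ν, η₁, …, ηₙ` be nilpotent elements of a
commutative (normed) `ℂ`-algebra.  The function
`μ(z) = z^{−n₀} e^{ν} ∏_{qⱼ ≠ 0} 1/(z^{−qⱼ/2} e^{ηⱼ/2} − z^{qⱼ/2} e^{−ηⱼ/2})`,
written (after factoring `z^{qⱼ/2}` out of each denominator) as
`μ(z) = z^{−n₀} (∏_{qⱼ≠0} z^{qⱼ/2}) ⬝ e^{ν} ∏_{qⱼ ≠ 0} (e^{ηⱼ/2} − z^{qⱼ} e^{−ηⱼ/2})⁻¹`,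
tends to `0` (coefficientwise, i.e. in the normed algebra) as `z → 0` and as `z → ∞`. -/
theorem stmt_17 {A : Type*} [NormedCommRing A] [NormedAlgebra ℂ A] [CompleteSpace A]
    (n : ℕ) (q : Fin n → ℤ) (hq : ∃ j, q j ≠ 0) (n₀ : ℤ)
    (hn₀ : ((|n₀| : ℤ) : ℝ) < (1 / 2) * ∑ j, ((|q j| : ℤ) : ℝ))
    (ν : A) (η : Fin n → A) (hν : IsNilpotent ν) (hη : ∀ j, IsNilpotent (η j)) :
    letI μ : ℂ → A := fun z =>
      (z ^ (-n₀) * ∏ j ∈ Finset.univ.filter (fun j => q j ≠ 0), z ^ ((q j : ℂ) / 2)) •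
        (NormedSpace.exp ν * ∏ j ∈ Finset.univ.filter (fun j => q j ≠ 0),
          Ring.inverse (NormedSpace.exp ((2 : ℂ)⁻¹ • η j) - z ^ (q j) • NormedSpace.exp (-((2 : ℂ)⁻¹ • η j))))
    Tendsto μ (𝓝[≠] (0 : ℂ)) (𝓝 0) ∧ Tendsto μ (Bornology.cobounded ℂ) (𝓝 0) :=
  stmt_17_general n q n₀ hn₀ ν η
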